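/- The bicomplex filled-in Julia set for parameter c = c1 + c2·i2 equals the idempotent cartesian product of the two complex filled-in Julia sets: K_{2,c} = K_{c1-c2·i1} ×_e K_{c1+c2·i1}. -/

import Mathlib

/- We model the bicomplex numbers `BC` via their idempotent representation:
a bicomplex number `w = w₁·e₁ + w₂·e₂` is identified with the pair `(w₁, w₂) : ℂ × ℂ`,
which is a ring isomorphism onto the product ring `ℂ × ℂ`. -/
noncomputable section

abbrev BC : Type := ℂ × ℂ

/-- The canonical embedding of `ℂ(i₁)` into the bicomplex numbers. -/
def BC.toBC (z : ℂ) : BC := (z, z)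

/-- The imaginary unit `i₁`. -/
def BC.i1 : BC := (Complex.I, Complex.I)

/-- The imaginary unit `i₂`. -/
def BC.i2 : BC := (-Complex.I, Complex.I)

/-- The hyperbolic unit `j = i₁·i₂`. -/
def BC.j : BC := BC.i1 * BC.i2

/-- The idempotent `e₁ = (1 + j)/2`. -/
def BC.e1 : BC := ((1 : BC) + BC.j) / 2

/-- The idempotent `e₂ = (1 - j)/2`. -/
def BC.e2 : BC := ((1 : BC) - BC.j) / 2

/-- The bicomplex number `z₁ + z₂·i₂`. -/
def BC.mk (z1 z2 : ℂ) : BC := BC.toBC z1 + BC.toBC z2 * BC.i2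

/-- The real modulus of a bicomplex number, expressed through its idempotent
components: `‖w₁·e₁ + w₂·e₂‖ = √((|w₁|² + |w₂|²)/2)`. -/
def BC.norm (w : BC) : ℝ := Real.sqrt ((‖w.1‖ ^ 2 + ‖w.2‖ ^ 2) / 2)

/-- The idempotent cartesian product `X₁ ×ₑ X₂`. -/
def BC.cartE (X1 X2 : Set ℂ) : Set BC :=
  {w : BC | ∃ w1 ∈ X1, ∃ w2 ∈ X2, w = BC.toBC w1 * BC.e1 + BC.toBC w2 * BC.e2}

/-- The complex filled-in Julia set of `z ↦ z² + a`. -/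
def Kc (a : ℂ) : Set ℂ :=
  {z : ℂ | ∃ M : ℝ, ∀ n : ℕ, ‖(fun z : ℂ => z ^ 2 + a)^[n] z‖ ≤ M}

/-- The bicomplex filled-in Julia set of `w ↦ w² + c`. -/
def K2 (c : BC) : Set BC :=
  {w : BC | ∃ M : ℝ, ∀ n : ℕ, BC.norm ((fun w : BC => w ^ 2 + c)^[n] w) ≤ M}

/- The idempotent representation makes `BC` the product ring `ℂ × ℂ`, in which `w ↦ w² + c`
acts componentwise; and `BC.norm` is equivalent to the sup norm of `ℂ × ℂ`, so an orbit is
bounded exactly when both of its component orbits are. -/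

namespace BC

lemma toBC_mul_e1_add_toBC_mul_e2 (w1 w2 : ℂ) : toBC w1 * e1 + toBC w2 * e2 = (w1, w2) := by
  ext <;> simp [toBC, e1, e2, j, i1, i2]

lemma mk_eq (z1 z2 : ℂ) : mk z1 z2 = (z1 - z2 * Complex.I, z1 + z2 * Complex.I) := by
  ext
  · simp [mk, toBC, i2]; ring
  · simp [mk, toBC, i2]

lemma cartE_eq_prod (X1 X2 : Set ℂ) : cartE X1 X2 = X1 ×ˢ X2 := by
  ext w
  simp [cartE, toBC_mul_e1_add_toBC_mul_e2, Prod.ext_iff, and_comm]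

lemma norm_le_norm (w : BC) : BC.norm w ≤ ‖w‖ := by
  rw [BC.norm, Real.sqrt_le_iff, Prod.norm_def]
  refine ⟨norm_nonneg w, ?_⟩
  have h1 := le_max_left ‖w.1‖ ‖w.2‖
  have h2 := le_max_right ‖w.1‖ ‖w.2‖
  nlinarith [norm_nonneg w.1, norm_nonneg w.2]

lemma norm_le_sqrt_two_mul_norm (w : BC) : ‖w‖ ≤ Real.sqrt 2 * BC.norm w := by
  rw [BC.norm, ← Real.sqrt_mul zero_le_two, Real.le_sqrt (norm_nonneg w) (by positivity),
    Prod.norm_def]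
  rcases max_cases ‖w.1‖ ‖w.2‖ with ⟨h, -⟩ | ⟨h, -⟩ <;> rw [h] <;>
    nlinarith [sq_nonneg ‖w.1‖, sq_nonneg ‖w.2‖]

lemma exists_forall_norm_le_iff {ι : Type*} (f : ι → BC) :
    (∃ M, ∀ n, BC.norm (f n) ≤ M) ↔ ∃ M, ∀ n, ‖f n‖ ≤ M :=
  ⟨fun ⟨M, hM⟩ ↦ ⟨Real.sqrt 2 * M, fun n ↦ (norm_le_sqrt_two_mul_norm _).trans
      (mul_le_mul_of_nonneg_left (hM n) (Real.sqrt_nonneg 2))⟩,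
    fun ⟨M, hM⟩ ↦ ⟨M, fun n ↦ (norm_le_norm _).trans (hM n)⟩⟩

end BC

lemma Prod.exists_forall_norm_le_iff {ι E F : Type*} [SeminormedAddGroup E] [SeminormedAddGroup F]
    (f : ι → E × F) :
    (∃ M, ∀ n, ‖f n‖ ≤ M) ↔ (∃ M, ∀ n, ‖(f n).1‖ ≤ M) ∧ ∃ M, ∀ n, ‖(f n).2‖ ≤ M := by
  simp only [norm_prod_le_iff]
  refine ⟨fun ⟨M, hM⟩ ↦ ⟨⟨M, fun n ↦ (hM n).1⟩, ⟨M, fun n ↦ (hM n).2⟩⟩,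
    fun ⟨⟨M1, hM1⟩, ⟨M2, hM2⟩⟩ ↦ ⟨max M1 M2, fun n ↦ ⟨?_, ?_⟩⟩⟩
  · exact (hM1 n).trans (le_max_left _ _)
  · exact (hM2 n).trans (le_max_right _ _)

lemma Prod.iterate_sq_add {R S : Type*} [Semiring R] [Semiring S] (a : R) (b : S) (n : ℕ) :
    (fun w : R × S ↦ w ^ 2 + (a, b))^[n] =
      Prod.map (fun z ↦ z ^ 2 + a)^[n] (fun z ↦ z ^ 2 + b)^[n] := by
  rw [← Prod.map_iterate]
  rfl

/-- `K_{2,c} = K_{c₁ - c₂·i₁} ×ₑ K_{c₁ + c₂·i₁}`. -/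
theorem stmt9 (c1 c2 : ℂ) :
    K2 (BC.mk c1 c2) =
      BC.cartE (Kc (c1 - c2 * Complex.I)) (Kc (c1 + c2 * Complex.I)) := by
  ext w
  simp only [K2, Kc, BC.mk_eq, BC.cartE_eq_prod, Set.mem_prod, Set.mem_ofPred_eq,
    BC.exists_forall_norm_le_iff, Prod.exists_forall_norm_le_iff, Prod.iterate_sq_add,
    Prod.map_fst, Prod.map_snd]
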